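/- arXiv:0810.1473 — 3 statements merged into one kernel-verified Lean document; each statement's English description precedes it below -/
import Mathlib

section
/- Let ν₁ ≤ ν₂ ≤ ν₃ ≤ ν₄ ≤ ν₅ be integers with ν₁ + ν₂ + ν₃ + ν₄ + ν₅ = 0. Set α₁ = ν₁ + ν₂ + ν₃, α₂ = ν₁ + ν₂ + ν₄, α₃ = min(ν₁ + ν₃ + ν₄, ν₁ + ν₂ + ν₅). Then α₁ + α₂ + α₃ ≤ 0. -/
/-- Weight inequality for degenerations of the quintic Del Pezzo threefold. -/
theorem stmt4 (ν₁ ν₂ ν₃ ν₄ ν₅ : ℤ)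
    (h12 : ν₁ ≤ ν₂) (h23 : ν₂ ≤ ν₃) (h34 : ν₃ ≤ ν₄) (h45 : ν₄ ≤ ν₅)
    (hsum : ν₁ + ν₂ + ν₃ + ν₄ + ν₅ = 0) :
    (ν₁ + ν₂ + ν₃) + (ν₁ + ν₂ + ν₄) + min (ν₁ + ν₃ + ν₄) (ν₁ + ν₂ + ν₅) ≤ 0 := by
  rcases min_cases (ν₁ + ν₃ + ν₄) (ν₁ + ν₂ + ν₅) with ⟨h, _⟩ | ⟨h, _⟩ <;> rw [h] <;> omega
end

section
/- Let n ≥ 2 and 1 ≤ s < n be integers, let r₁, …, r_s be positive real numbers, and let a₀, d₀, d₁ be real numbers with d₀ ≠ 0. Let α₁, …, α_s be real numbers. Define d₀(X) = (∏r_j)·d₀·n!/(n−s)!, d₁(X) = ((n−s)/2)·(2d₁/(n d₀) − ∑r_j)·d₀(X), a₀(X) = (∏r_j)·a₀·(n+1)!/(n−s+1)! − (∑ α_j/r_j)/(n−s+1)·d₀(X), and a₁(X) = (∏r_j)·(a₁·n!/(n−s)! − a₀·(n+1)!·(∑r_j)/(2(n−s)!)) + (1/2)·d₀(X)·∑α_j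 − (1/(n−s))·d₁(X)·∑(α_j/r_j). Then a₀(X)·d₁(X)/d₀(X)² − a₁(X)/d₀(X) = (a₀d₁/d₀² − a₁/d₀) + (1/2)·( −∑_{j=1}^s (α_j/r_j − a₀/d₀)·r_j + ((2d₁/(nd₀) − ∑r_j)/(n+1−s))·∑_{j=1}^s (α_j/r_j − a₀/d₀) ). -/
/-- Algebraic computation proving Theorem 4.1. -/
theorem stmt11 (n s : ℕ) (hn : 2 ≤ n) (hs : 1 ≤ s) (hsn : s < n)
    (r α : Fin s → ℝ) (hr : ∀ j, 0 < r j)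
    (a₀ a₁ d₀ d₁ dX0 dX1 aX0 aX1 : ℝ) (hd₀ : d₀ ≠ 0)
    (hdX0 : dX0 = (∏ j, r j) * d₀ * (Nat.factorial n) / (Nat.factorial (n - s)))
    (hdX1 : dX1 = (((n : ℝ) - s) / 2) * (2 * d₁ / (n * d₀) - ∑ j, r j) * dX0)
    (haX0 : aX0 = (∏ j, r j) * a₀ * (Nat.factorial (n + 1)) / (Nat.factorial (n - s + 1))
      - ((∑ j, α j / r j) / ((n : ℝ) - s + 1)) * dX0)
    (haX1 : aX1 = (∏ j, r j) *
        (a₁ * (Nat.factorial n) / (Nat.factorial (n - s))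
          - a₀ * (Nat.factorial (n + 1)) * (∑ j, r j) / (2 * (Nat.factorial (n - s))))
      + (1 / 2) * dX0 * (∑ j, α j)
      - (1 / ((n : ℝ) - s)) * dX1 * (∑ j, α j / r j)) :
    aX0 * dX1 / dX0 ^ 2 - aX1 / dX0
      = (a₀ * d₁ / d₀ ^ 2 - a₁ / d₀)
        + (1 / 2) * (-(∑ j, (α j / r j - a₀ / d₀) * r j)
          + ((2 * d₁ / (n * d₀) - ∑ j, r j) / ((n : ℝ) + 1 - s))
            * ∑ j, (α j / r j - a₀ / d₀)) := by
  have hP : (0:ℝ) < ∏ j, r j := Finset.prod_pos (fun j _ => hr j)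
  have hPne : (∏ j, r j) ≠ 0 := ne_of_gt hP
  have hns : (s:ℝ) < n := by exact_mod_cast hsn
  have hnpos : (0:ℝ) < n := by positivity
  have h1 : ((n:ℝ) - s) ≠ 0 := by linarith [sub_pos.mpr hns]
  have h2 : ((n:ℝ) - s + 1) ≠ 0 := by nlinarith [sub_pos.mpr hns]
  have h3 : ((n:ℝ) + 1 - s) ≠ 0 := by nlinarith [sub_pos.mpr hns]
  have hnne : (n:ℝ) ≠ 0 := ne_of_gt hnpos
  have hF : ((Nat.factorial n : ℕ) : ℝ) ≠ 0 := by positivity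
  have hG : ((Nat.factorial (n - s) : ℕ) : ℝ) ≠ 0 := by positivity
  have hfac1 : ((Nat.factorial (n+1) : ℕ) : ℝ) = ((n:ℝ)+1) * (Nat.factorial n) := by
    rw [Nat.factorial_succ]; push_cast; ring
  have hfac2 : ((Nat.factorial (n-s+1) : ℕ) : ℝ) = ((n:ℝ)-s+1) * (Nat.factorial (n-s)) := by
    rw [Nat.factorial_succ]
    push_cast [Nat.cast_sub hsn.le]
    ring
  have hsum1 : ∑ j, (α j / r j - a₀ / d₀) * r j = (∑ j, α j) - (a₀/d₀) * ∑ j, r j := by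
    rw [Finset.mul_sum, ← Finset.sum_sub_distrib]
    refine Finset.sum_congr rfl fun j _ => ?_
    field_simp [(hr j).ne']
  have hsum2 : ∑ j, (α j / r j - a₀ / d₀) = (∑ j, α j / r j) - s * (a₀/d₀) := by
    rw [Finset.sum_sub_distrib]
    simp [Finset.card_univ]
  rw [hsum1, hsum2]
  subst haX1 haX0 hdX1 hdX0
  rw [hfac1, hfac2]
  field_simp
  ring
end

section
/- Let n ≥ 2 and s ≥ 1 be integers with n − s ≥ 1, and let r₁, …, r_s be positive integers. Consider the function P(m) = ∑_{S ⊆ {1,…,s}} (−1)^{|S|} · C(m − ∑_{j∈S} r_j + n, n) defined for integers m > ∑_{j=1}^s r_j, where C(a, n) is the binomial coefficient a!/(n!(a−n)!). Then there is a constant C ≥ 0 such that for all sufficiently large m, | P(m) − (∏_{j=1}^s r_j)·( m^{n−s}/(n−s)! + (n+1−∑r_j)·m^{n−s−1}/(2(n−s−1)!) ) | ≤ C·m^{n−s−2} (where for n−s = 1 the error term is bounded by a constant). -/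
open Polynomial Finset

private lemma asc_prod (y : ℕ) : ∀ k : ℕ, (y + 1).ascFactorial k = ∏ i ∈ Finset.range k, (y + 1 + i)
  | 0 => by simp
  | k + 1 => by rw [Nat.ascFactorial_succ, Finset.prod_range_succ, asc_prod y k, mul_comm]

private lemma choose_fact (y n : ℕ) :
    ((y + n).choose n : ℝ) * n.factorial = ∏ i ∈ Finset.range n, ((y : ℝ) + 1 + i) := by
  have h2 := asc_prod y n
  rw [Nat.ascFactorial_eq_factorial_mul_choose] at h2
  have h3 := congrArg (Nat.cast (R := ℝ)) h2
  push_cast at h3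
  linear_combination h3

private lemma choose2_mul : ∀ e : ℕ, (e + 2).choose e * 2 = (e + 2) * (e + 1)
  | 0 => rfl
  | k + 1 => by
      have h1 : (k + 3).choose (k + 1) = (k + 2).choose k + (k + 2).choose (k + 1) :=
        Nat.choose_succ_succ _ _
      have h2 : (k + 2).choose (k + 1) = k + 2 := Nat.choose_succ_self_right _
      have ih := choose2_mul k
      have : (k + 1 + 2).choose (k + 1) = (k + 2).choose k + (k + 2) := by
        rw [show k + 1 + 2 = k + 2 + 1 from by ring, Nat.choose_succ_succ, h2]
      rw [this]
      nlinarith [ih]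

private lemma gauss_sum (n : ℕ) : (∑ i ∈ Finset.range n, (i + 1)) * 2 = n * (n + 1) := by
  have h := Finset.sum_range_id_mul_two (n + 1)
  rw [Finset.sum_range_succ'] at h
  simpa [Nat.mul_comm] using h

private lemma coeff_comp_sub (p : ℝ[X]) (c : ℝ) (N j : ℕ) (hp : p.natDegree < N) :
    (p.comp (X - C c)).coeff j
      = ∑ k ∈ Finset.range N, p.coeff k * ((-c) ^ (k - j) * (k.choose j : ℝ)) := by
  conv_lhs => rw [p.as_sum_range' N hp]
  rw [Polynomial.sum_comp, Polynomial.finset_sum_coeff]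
  apply Finset.sum_congr rfl
  intro k _
  rw [Polynomial.monomial_comp, sub_eq_add_neg, ← Polynomial.C_neg,
    Polynomial.coeff_C_mul, Polynomial.coeff_X_add_C_pow]

private lemma delta_natDegree (p : ℝ[X]) (c : ℝ) (e : ℕ) (hp : p.natDegree ≤ e + 2) :
    (p - p.comp (X - C c)).natDegree ≤ e + 1 := by
  rw [Polynomial.natDegree_le_iff_coeff_eq_zero]
  intro j hj
  rw [Polynomial.coeff_sub, coeff_comp_sub p c (e + 3) j (by omega)]
  rcases eq_or_lt_of_le (show e + 2 ≤ j by omega) with h | h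
  · rw [Finset.sum_eq_single (e + 2)]
    · rw [← h, Nat.sub_self, Nat.choose_self]
      ring
    · intro k hk hne
      have hk' := Finset.mem_range.mp hk
      have : k < j := by omega
      rw [Nat.choose_eq_zero_of_lt this]
      ring
    · intro hk; exact absurd (Finset.mem_range.mpr (by omega)) hk
  · rw [Polynomial.coeff_eq_zero_of_natDegree_lt (by omega), Finset.sum_eq_zero, sub_zero]
    intro k hk
    have hk' := Finset.mem_range.mp hk
    rw [Nat.choose_eq_zero_of_lt (by omega)]
    ring

private lemma delta_coeff_top (p : ℝ[X]) (c : ℝ) (e : ℕ) (hp : p.natDegree ≤ e + 2) :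
    (p - p.comp (X - C c)).coeff (e + 1) = (e + 2 : ℝ) * c * p.coeff (e + 2) := by
  rw [Polynomial.coeff_sub, coeff_comp_sub p c (e + 3) (e + 1) (by omega),
    Finset.sum_range_succ, Finset.sum_range_succ,
    Finset.sum_eq_zero (fun k hk => by
      rw [Nat.choose_eq_zero_of_lt (Finset.mem_range.mp hk)]; ring)]
  rw [show e + 1 - (e + 1) = 0 from by omega, show e + 2 - (e + 1) = 1 from by omega,
    Nat.choose_self, show (e + 2).choose (e + 1) = e + 2 from Nat.choose_succ_self_right _]
  push_cast
  ring

private lemma delta_coeff_next (p : ℝ[X]) (c : ℝ) (e : ℕ) (hp : p.natDegree ≤ e + 2) :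
    (p - p.comp (X - C c)).coeff e
      = (e + 1 : ℝ) * c * p.coeff (e + 1) - ((e + 2).choose e : ℝ) * c ^ 2 * p.coeff (e + 2) := by
  rw [Polynomial.coeff_sub, coeff_comp_sub p c (e + 3) e (by omega),
    Finset.sum_range_succ, Finset.sum_range_succ, Finset.sum_range_succ,
    Finset.sum_eq_zero (fun k hk => by
      rw [Nat.choose_eq_zero_of_lt (Finset.mem_range.mp hk)]; ring)]
  rw [show e - e = 0 from by omega, show e + 1 - e = 1 from by omega,
    show e + 2 - e = 2 from by omega,
    Nat.choose_self, show (e + 1).choose e = e + 1 from Nat.choose_succ_self_right _]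
  push_cast
  ring

private noncomputable def q0 (n : ℕ) : ℝ[X] := ∏ i ∈ Finset.range n, (X + C ((i : ℝ) + 1))

private lemma q0_monic (n : ℕ) : (q0 n).Monic :=
  monic_prod_of_monic _ _ fun i _ => monic_X_add_C _

private lemma q0_natDegree (n : ℕ) : (q0 n).natDegree = n := by
  rw [q0, Polynomial.natDegree_prod_of_monic _ _ fun i _ => monic_X_add_C _]
  simp only [Polynomial.natDegree_X_add_C, Finset.sum_const, Finset.card_range, smul_eq_mul,
    mul_one]

private lemma q0_coeff_top (n : ℕ) : (q0 n).coeff n = 1 := by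
  have := (q0_monic n).coeff_natDegree
  rwa [q0_natDegree] at this

private lemma q0_coeff_next (n : ℕ) (hn : 1 ≤ n) : (q0 n).coeff (n - 1) * 2 = n * (n + 1) := by
  have h1 : (q0 n).coeff (n - 1) = (q0 n).nextCoeff := by
    rw [Polynomial.nextCoeff_of_natDegree_pos (by rw [q0_natDegree]; omega), q0_natDegree]
  have h2 : (q0 n).nextCoeff = ∑ i ∈ Finset.range n, ((i : ℝ) + 1) := by
    rw [q0, Polynomial.Monic.nextCoeff_prod _ _ fun i _ => monic_X_add_C _]
    simp only [Polynomial.nextCoeff_X_add_C]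
  have h3 := congrArg (Nat.cast (R := ℝ)) (gauss_sum n)
  push_cast at h3
  rw [h1, h2]
  linear_combination h3

private noncomputable def Phi (n s : ℕ) (r : Fin s → ℕ) (t : Finset (Fin s)) : ℝ[X] :=
  ∑ S ∈ t.powerset, (-1 : ℝ) ^ S.card • ((q0 n).comp (X - C (∑ j ∈ S, (r j : ℝ))))

private lemma Phi_empty (n s : ℕ) (r : Fin s → ℕ) : Phi n s r ∅ = q0 n := by
  rw [Phi]
  simp

private lemma Phi_insert (n s : ℕ) (r : Fin s → ℕ) {a : Fin s} {t : Finset (Fin s)} (ha : a ∉ t) :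
    Phi n s r (insert a t) = Phi n s r t - (Phi n s r t).comp (X - C (r a : ℝ)) := by
  have hterm : ∀ S ∈ t.powerset,
      (-1 : ℝ) ^ (insert a S).card • ((q0 n).comp (X - C (∑ j ∈ insert a S, (r j : ℝ))))
        = -(((-1 : ℝ) ^ S.card • ((q0 n).comp (X - C (∑ j ∈ S, (r j : ℝ))))).comp
            (X - C ((r a : ℝ)))) := by
    intro S hS
    have haS : a ∉ S := fun h => ha (Finset.mem_powerset.mp hS h)
    have hc : (X - C (∑ j ∈ S, (r j : ℝ))).comp (X - C ((r a : ℝ)))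
        = X - C ((r a : ℝ) + ∑ j ∈ S, (r j : ℝ)) := by
      rw [Polynomial.sub_comp, Polynomial.X_comp, Polynomial.C_comp, Polynomial.C_add]
      ring
    rw [Finset.card_insert_of_notMem haS, Finset.sum_insert haS, Polynomial.smul_comp,
      Polynomial.comp_assoc, hc, pow_succ]
    push_cast
    module
  rw [Phi, Finset.sum_powerset_insert ha, Finset.sum_congr rfl hterm, Finset.sum_neg_distrib,
    Phi, Polynomial.sum_comp, ← sub_eq_add_neg]

private lemma Phi_props (n s : ℕ) (r : Fin s → ℕ) :
    ∀ t : Finset (Fin s), t.card + 1 ≤ n →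
      (Phi n s r t).natDegree ≤ n - t.card ∧
      (Phi n s r t).coeff (n - t.card) * ((n - t.card).factorial : ℝ)
        = (∏ j ∈ t, (r j : ℝ)) * (n.factorial : ℝ) ∧
      (Phi n s r t).coeff (n - t.card - 1) * (2 * ((n - t.card - 1).factorial : ℝ))
        = (∏ j ∈ t, (r j : ℝ)) * (n.factorial : ℝ) * ((n : ℝ) + 1 - ∑ j ∈ t, (r j : ℝ)) := by
  intro t
  induction t using Finset.induction_on with
  | empty =>
    intro hn
    rw [Phi_empty]
    simp only [Finset.card_empty, Finset.prod_empty, Finset.sum_empty, Nat.sub_zero, one_mul]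
    refine ⟨le_of_eq (q0_natDegree n), by rw [q0_coeff_top n]; ring, ?_⟩
    have h2 := q0_coeff_next n (by omega)
    have h3 : (n.factorial : ℝ) = n * ((n - 1).factorial : ℝ) := by
      rw [← Nat.mul_factorial_pred (show n ≠ 0 by omega)]; push_cast; ring
    linear_combination ((n - 1).factorial : ℝ) * h2 - ((n : ℝ) + 1) * h3
  | @insert a t ha ih =>
    intro hcard
    rw [Finset.card_insert_of_notMem ha] at hcard ⊢
    have hc : t.card + 2 ≤ n := by omega
    obtain ⟨hdeg, hA, hB⟩ := ih (by omega)
    obtain ⟨e, he⟩ : ∃ e, n - t.card = e + 2 := ⟨n - t.card - 2, by omega⟩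
    have he1 : n - t.card - 1 = e + 1 := by omega
    have he2 : n - (t.card + 1) = e + 1 := by omega
    have he3 : n - (t.card + 1) - 1 = e := by omega
    rw [he] at hA
    rw [he1] at hB
    rw [he3, he2, Phi_insert n s r ha, Finset.prod_insert ha, Finset.sum_insert ha]
    have hdeg' : (Phi n s r t).natDegree ≤ e + 2 := he ▸ hdeg
    set c : ℝ := (r a : ℝ) with hcdef
    set A : ℝ := (Phi n s r t).coeff (e + 2) with hAdef
    set B : ℝ := (Phi n s r t).coeff (e + 1) with hBdef
    have hf1 : ((e + 1).factorial : ℝ) = (e + 1) * (e.factorial : ℝ) := by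
      rw [Nat.factorial_succ]; push_cast; ring
    have hf2 : ((e + 2).factorial : ℝ) = ((e : ℝ) + 2) * ((e + 1) * (e.factorial : ℝ)) := by
      rw [Nat.factorial_succ, Nat.factorial_succ]; push_cast; ring
    rw [hf2] at hA
    rw [hf1] at hB
    have hch : ((e + 2).choose e : ℝ) * 2 = ((e : ℝ) + 2) * ((e : ℝ) + 1) := by
      have := congrArg (Nat.cast (R := ℝ)) (choose2_mul e)
      push_cast at this
      linarith [this]
    refine ⟨delta_natDegree _ _ e hdeg', ?_, ?_⟩
    · rw [delta_coeff_top _ _ e hdeg', ← hAdef, hf1]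
      linear_combination c * hA
    · rw [delta_coeff_next _ _ e hdeg', ← hAdef, ← hBdef]
      linear_combination c * hB - c ^ 2 * hA - c ^ 2 * A * (e.factorial : ℝ) * hch

/-- Hilbert function of a complete intersection in `ℙⁿ` via the Koszul resolution:
asymptotics identifying `d₀(X)` and `d₁(X)`. -/
theorem stmt14 (n s : ℕ) (hn : 2 ≤ n) (hs : 1 ≤ s) (hns : 1 ≤ n - s)
    (r : Fin s → ℕ) (hr : ∀ j, 0 < r j) :
    ∃ C : ℝ, 0 ≤ C ∧ ∃ M : ℕ, (∑ j, r j) < M ∧ ∀ m : ℕ, M ≤ m →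
      |(∑ S : Finset (Fin s), (-1 : ℝ) ^ S.card * ((m - ∑ j ∈ S, r j + n).choose n : ℝ))
        - (∏ j, (r j : ℝ)) * ((m : ℝ) ^ (n - s) / (Nat.factorial (n - s))
          + ((n : ℝ) + 1 - ∑ j, (r j : ℝ)) * (m : ℝ) ^ (n - s - 1)
            / (2 * (Nat.factorial (n - s - 1))))|
      ≤ C * (m : ℝ) ^ (n - s - 2) := by
  classical
  set D : ℕ := n - s with hD
  have hD1 : 1 ≤ D := hns
  have hcardu : (Finset.univ : Finset (Fin s)).card = s := by
    rw [Finset.card_univ, Fintype.card_fin]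
  obtain ⟨hdeg, hA, hB⟩ := Phi_props n s r Finset.univ (by rw [hcardu]; omega)
  rw [hcardu] at hdeg hA hB
  set Φ : ℝ[X] := Phi n s r Finset.univ with hΦdef
  set A : ℝ := Φ.coeff D with hAdef
  set B : ℝ := Φ.coeff (D - 1) with hBdef
  set Pi : ℝ := ∏ j, (r j : ℝ) with hPidef
  set T : ℝ := ∑ j, (r j : ℝ) with hTdef
  set rem : ℝ[X] := Φ - C A * X ^ D - C B * X ^ (D - 1) with hremdef
  have hremdeg : rem.natDegree ≤ D - 2 := by
    rw [Polynomial.natDegree_le_iff_coeff_eq_zero]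
    intro j hj
    simp only [hremdef, Polynomial.coeff_sub, Polynomial.coeff_C_mul, Polynomial.coeff_X_pow]
    by_cases h1 : j = D
    · subst h1
      rw [if_pos rfl, if_neg (by omega)]
      simp [hAdef]
    · by_cases h2 : j = D - 1
      · subst h2
        rw [if_neg (by omega), if_pos rfl]
        simp [hBdef]
      · rw [Polynomial.coeff_eq_zero_of_natDegree_lt (lt_of_le_of_lt hdeg (by omega)),
          if_neg h1, if_neg h2]
        ring
  set K : ℝ := ∑ j ∈ Finset.range (D - 2 + 1), |rem.coeff j| with hKdef
  have hK : 0 ≤ K := Finset.sum_nonneg fun _ _ => abs_nonneg _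
  have hn0 : (n.factorial : ℝ) ≠ 0 := Nat.cast_ne_zero.mpr n.factorial_ne_zero
  have hnpos : (0 : ℝ) < (n.factorial : ℝ) := by positivity
  refine ⟨K / n.factorial, by positivity, (∑ j, r j) + 1, by omega, ?_⟩
  intro m hm
  -- evaluation identity
  have hsum : (∑ S : Finset (Fin s), (-1 : ℝ) ^ S.card * ((m - ∑ j ∈ S, r j + n).choose n : ℝ))
      * (n.factorial : ℝ) = Φ.eval (m : ℝ) := by
    rw [hΦdef, Phi, ← Finset.powerset_univ, Finset.sum_mul, Polynomial.eval_finset_sum]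
    apply Finset.sum_congr rfl
    intro S _
    have hle : (∑ j ∈ S, r j) ≤ m := by
      calc (∑ j ∈ S, r j) ≤ ∑ j, r j :=
            Finset.sum_le_sum_of_subset (Finset.subset_univ S)
        _ ≤ m := by omega
    have hcast : ((m - ∑ j ∈ S, r j : ℕ) : ℝ) = (m : ℝ) - ∑ j ∈ S, (r j : ℝ) := by
      push_cast [Nat.cast_sub hle]
      ring
    have hcf := choose_fact (m - ∑ j ∈ S, r j) n
    rw [Polynomial.eval_smul, smul_eq_mul, Polynomial.eval_comp, Polynomial.eval_sub,
      Polynomial.eval_X, Polynomial.eval_C, q0, Polynomial.eval_prod]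
    simp only [Polynomial.eval_add, Polynomial.eval_X, Polynomial.eval_C]
    rw [mul_assoc]
    congr 1
    rw [hcf, hcast]
    apply Finset.prod_congr rfl
    intro i _
    ring
  -- target rewrite
  have hS2 : (∑ S : Finset (Fin s), (-1 : ℝ) ^ S.card * ((m - ∑ j ∈ S, r j + n).choose n : ℝ))
      = Φ.eval (m : ℝ) / (n.factorial : ℝ) := by
    rw [eq_div_iff hn0]
    exact hsum
  have hΦeval : Φ.eval (m : ℝ) = rem.eval (m : ℝ) + A * (m : ℝ) ^ D + B * (m : ℝ) ^ (D - 1) := by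
    simp only [hremdef, Polynomial.eval_sub, Polynomial.eval_mul, Polynomial.eval_C,
      Polynomial.eval_pow, Polynomial.eval_X]
    ring
  have hD0 : ((D.factorial : ℝ)) ≠ 0 := Nat.cast_ne_zero.mpr D.factorial_ne_zero
  have hD10 : (((D - 1).factorial : ℝ)) ≠ 0 := Nat.cast_ne_zero.mpr (D - 1).factorial_ne_zero
  have hA2 : A = Pi * (n.factorial : ℝ) / (D.factorial : ℝ) := by
    rw [eq_div_iff hD0]; exact hA
  have hB2 : B = Pi * (n.factorial : ℝ) * ((n : ℝ) + 1 - T) / (2 * ((D - 1).factorial : ℝ)) := by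
    rw [eq_div_iff (by positivity)]
    exact hB
  have key : (∑ S : Finset (Fin s), (-1 : ℝ) ^ S.card * ((m - ∑ j ∈ S, r j + n).choose n : ℝ))
      - Pi * ((m : ℝ) ^ D / (D.factorial : ℝ)
          + ((n : ℝ) + 1 - T) * (m : ℝ) ^ (D - 1) / (2 * ((D - 1).factorial : ℝ)))
      = rem.eval (m : ℝ) / (n.factorial : ℝ) := by
    rw [hS2, hΦeval, hA2, hB2]
    field_simp
    ring
  rw [key, abs_div, abs_of_pos hnpos, div_le_iff₀ hnpos]
  have hm1 : (1 : ℝ) ≤ (m : ℝ) := by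
    have : 1 ≤ m := by omega
    exact_mod_cast this
  have hbound : |rem.eval (m : ℝ)| ≤ K * (m : ℝ) ^ (D - 2) := by
    rw [Polynomial.eval_eq_sum_range' (lt_of_le_of_lt hremdeg (Nat.lt_succ_self _)) (m : ℝ)]
    calc |∑ j ∈ Finset.range (D - 2 + 1), rem.coeff j * (m : ℝ) ^ j|
        ≤ ∑ j ∈ Finset.range (D - 2 + 1), |rem.coeff j * (m : ℝ) ^ j| :=
          Finset.abs_sum_le_sum_abs _ _
      _ ≤ ∑ j ∈ Finset.range (D - 2 + 1), |rem.coeff j| * (m : ℝ) ^ (D - 2) := by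
          apply Finset.sum_le_sum
          intro j hj
          rw [abs_mul, abs_pow, abs_of_nonneg (by positivity : (0:ℝ) ≤ (m:ℝ))]
          exact mul_le_mul_of_nonneg_left
            (pow_le_pow_right₀ hm1 (by simpa using Nat.lt_succ_iff.mp (Finset.mem_range.mp hj)))
            (abs_nonneg _)
      _ = K * (m : ℝ) ^ (D - 2) := by rw [hKdef, Finset.sum_mul]
  calc |rem.eval (m : ℝ)| ≤ K * (m : ℝ) ^ (D - 2) := hbound
    _ = K / (n.factorial : ℝ) * (m : ℝ) ^ (D - 2) * (n.factorial : ℝ) := by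
        field_simp
end
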